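/- arXiv:2402.13175 — 3 statements merged into one kernel-verified Lean document; each statement's English description precedes it below -/
import Mathlib

section
/- Let a ∈ ℍ with ‖a‖ < 1 and let α ∈ ℍ. Define 𝓕_a(q) = (q²‖a‖² − 2·Re(a)·q + 1)⁻¹ · (q²a − q(a² + 1) + a). Then the directional derivative of 𝓕_a at the point a in the direction α, i.e. the derivative at t = 0 of the map t ↦ 𝓕_a(a + t·α) (t real), exists and equals ((1 − a²)(1 − ‖a‖²))⁻¹ · (aαa − α). -/
/-!
Write `𝓕_a(q) = D(q)⁻¹ N(q)`. The numerator vanishes at `q = a`, so along the line `a + tα` the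
product rule leaves only `D(a)⁻¹ N'(a)α`, and `N'(a)α = (αa + aα)a − α(a² + 1) = aαa − α`. The
quaternionic quadratic relation `a² = 2 Re(a) a − ‖a‖²` factors the denominator as
`D(a) = (1 − a²)(1 − ‖a‖²)`, which is nonzero because `‖a²‖ < 1`.
-/

/-- The regular Möbius transformation `𝓕_a` in its explicit rational form. -/
noncomputable def regularMobius (a q : Quaternion ℝ) : Quaternion ℝ :=
  (‖a‖ ^ 2 • q ^ 2 - (2 * a.re) • q + 1)⁻¹ * (q ^ 2 * a - q * (a ^ 2 + 1) + a)

theorem pow_ne_one_of_norm_lt_one {R : Type*} [NormedRing R] [NormOneClass R] {a : R}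
    (ha : ‖a‖ < 1) {n : ℕ} (hn : n ≠ 0) : a ^ n ≠ 1 := by
  intro h
  have : ‖a‖ ^ n < 1 := pow_lt_one₀ (norm_nonneg a) ha hn
  have := norm_pow_le' a (Nat.pos_of_ne_zero hn)
  rw [h, norm_one] at this
  linarith

theorem HasDerivAt.mul_of_eq_zero {𝕜 𝔸 : Type*} [NontriviallyNormedField 𝕜] [NormedRing 𝔸]
    [NormedAlgebra 𝕜 𝔸] {f g : 𝕜 → 𝔸} {g' : 𝔸} {x : 𝕜} (hg : HasDerivAt g g' x)
    (hgx : g x = 0) (hf : DifferentiableAt 𝕜 f x) :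
    HasDerivAt (fun y => f y * g y) (f x * g') x := by
  simpa [hgx] using hf.hasDerivAt.fun_mul hg

namespace Quaternion

variable {R : Type*} [CommRing R]

theorem sq_eq_two_re_smul_sub_normSq (a : ℍ[R]) :
    a ^ 2 = (2 * a.re) • a - ((normSq a : R) : ℍ[R]) := by
  ext <;> simp [sq, normSq_def'] <;> ring

theorem normSq_smul_sq_sub_two_re_smul_add_one (a : ℍ[R]) :
    normSq a • a ^ 2 - (2 * a.re) • a + 1 = (1 - a ^ 2) * ((1 - normSq a : R) : ℍ[R]) := by
  have hcoe : ((normSq a : R) : ℍ[R]) = normSq a • 1 := by rw [← coe_mul_eq_smul, mul_one]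
  rw [mul_coe_eq_smul, sq_eq_two_re_smul_sub_normSq, hcoe]
  module

theorem norm_sq_smul_sq_sub_two_re_smul_add_one (a : ℍ) :
    ‖a‖ ^ 2 • a ^ 2 - (2 * a.re) • a + 1 = (1 - a ^ 2) * ((1 - ‖a‖ ^ 2 : ℝ) : ℍ) := by
  rw [sq ‖a‖, ← normSq_eq_norm_mul_self, normSq_smul_sq_sub_two_re_smul_add_one]

end Quaternion

/-- the directional derivative of `𝓕_a` at `a` in the direction `α` exists and
equals `((1 − a²)(1 − ‖a‖²))⁻¹ (aαa − α)`. -/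
theorem regularMobius_directional_deriv (a : Quaternion ℝ) (ha : ‖a‖ < 1) (α : Quaternion ℝ) :
    HasDerivAt (fun t : ℝ => regularMobius a (a + t • α))
      (((1 - a ^ 2) * ((1 - ‖a‖ ^ 2 : ℝ) : Quaternion ℝ))⁻¹ * (a * α * a - α)) 0 := by
  have hden := a.norm_sq_smul_sq_sub_two_re_smul_add_one
  have hden_ne : (1 - a ^ 2) * ((1 - ‖a‖ ^ 2 : ℝ) : Quaternion ℝ) ≠ 0 := by
    refine mul_ne_zero (sub_ne_zero.2 (pow_ne_one_of_norm_lt_one ha two_ne_zero).symm) ?_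
    rw [Ne, ← Quaternion.coe_zero, Quaternion.coe_inj]
    nlinarith [norm_nonneg a]
  have hline : HasDerivAt (fun t : ℝ => a + t • α) α 0 := by
    simpa using ((hasDerivAt_id (0 : ℝ)).smul_const α).const_add a
  have hsq : HasDerivAt (fun t : ℝ => (a + t • α) ^ 2) (α * a + a * α) 0 := by
    simpa [sq] using hline.fun_mul hline
  have hden_inv : DifferentiableAt ℝ
      (fun t : ℝ => (‖a‖ ^ 2 • (a + t • α) ^ 2 - (2 * a.re) • (a + t • α) + 1)⁻¹) 0 := by
    refine DifferentiableAt.fun_inv (by fun_prop) ?_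
    simpa [hden] using hden_ne
  have hnum : HasDerivAt (fun t : ℝ => (a + t • α) ^ 2 * a - (a + t • α) * (a ^ 2 + 1) + a)
      ((α * a + a * α) * a - α * (a ^ 2 + 1)) 0 :=
    ((hsq.mul_const a).fun_sub (hline.mul_const (a ^ 2 + 1))).add_const a
  have hzero : (a + (0 : ℝ) • α) ^ 2 * a - (a + (0 : ℝ) • α) * (a ^ 2 + 1) + a = 0 := by
    rw [zero_smul, add_zero]; noncomm_ring
  refine (hnum.mul_of_eq_zero hzero hden_inv).congr_deriv ?_
  rw [zero_smul, add_zero, hden]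
  congr 1
  noncomm_ring
end

section
/- Let I, J ∈ ℍ satisfy I² = −1, J² = −1 and IJ = −JI. Let q ∈ ℍ with ‖q‖ < 1 and q ∈ ℂ_I (i.e. q = x + yI with x, y ∈ ℝ), and let α = α₁ + α₂·J and β = β₁ + β₂·J with α₁, α₂, β₁, β₂ in the real span of {1, I}. Then G_q(α, β) = Re(α · conj(β)) / (1 − ‖q‖²)² + 4 · ‖Im(q)‖² · Re((α₂J) · (β₂J)) / (‖1 − q²‖² · (1 − ‖q‖²)²). -/
/-!
Write `ℍ = ℂ_I ⊕ ℂ_I J`. Since `ℂ_I` is commutative and `J c = c̄ J` for `c ∈ ℂ_I`, the map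
`α ↦ α - q α q` acts on `ℂ_I` as right multiplication by `1 - q²` and on `ℂ_I J` as
multiplication by `1 - ‖q‖²`. The two summands are orthogonal for `⟪a, b⟫ = Re (a b̄)`, and right
multiplication by `c` scales this inner product by `‖c‖²`, so the numerator of `G_q(α, β)` is
`‖1 - q²‖² ⟪α₁, β₁⟫ + (1 - ‖q‖²)² ⟪α₂ J, β₂ J⟫`. The identity
`‖1 - q²‖² = (1 - ‖q‖²)² + 4 ‖Im q‖²`, valid for every quaternion, splits off the hyperbolic term.
-/

/-- The slice Riemannian metric of the quaternionic unit ball. -/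
noncomputable def sliceRiemannian (q α β : Quaternion ℝ) : ℝ :=
  ((α - q * α * q) * star (β - q * β * q)).re / (‖1 - q ^ 2‖ ^ 2 * (1 - ‖q‖ ^ 2) ^ 2)

open Quaternion
open scoped RealInnerProductSpace

namespace Quaternion

theorem re_eq_zero_of_sq_eq_neg_one {a : ℍ} (h : a ^ 2 = -1) : a.re = 0 := by
  have hnormSq : normSq a = 1 := by
    have h' := congrArg normSq h
    rw [map_pow, normSq_neg, map_one] at h'
    exact (pow_eq_one_iff_of_nonneg normSq_nonneg two_ne_zero).mp h'
  exact sq_eq_neg_normSq.mp (by rw [h, hnormSq, coe_one])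

theorem re_mul_comm (a b : ℍ) : (a * b).re = (b * a).re := by
  simp only [re_mul]; ring

theorem sq_norm_eq_normSq (a : ℍ) : ‖a‖ ^ 2 = normSq a := by
  rw [normSq_eq_norm_mul_self, sq]

theorem norm_one_sub_sq_sq (q : ℍ) : ‖1 - q ^ 2‖ ^ 2 = (1 - ‖q‖ ^ 2) ^ 2 + 4 * ‖q.im‖ ^ 2 := by
  simp only [sq_norm_eq_normSq, normSq_def', sq q, re_sub, imI_sub, imJ_sub, imK_sub, re_mul,
    imI_mul, imJ_mul, imK_mul, re_one, imI_one, imJ_one, imK_one, re_im, imI_im, imJ_im, imK_im]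
  ring

theorem re_mul_eq_neg_inner_of_re_eq_zero {a b : ℍ} (hb : b.re = 0) : (a * b).re = -⟪a, b⟫ := by
  rw [inner_def, star_eq_neg.mpr hb, mul_neg, re_neg, neg_neg]

theorem inner_mul_right_mul_right (a b c : ℍ) : ⟪a * c, b * c⟫ = ‖c‖ ^ 2 * ⟪a, b⟫ := by
  rw [inner_def, inner_def, star_mul, mul_assoc, ← mul_assoc c, self_mul_star, coe_mul_eq_smul,
    mul_smul_comm, re_smul, normSq_eq_norm_mul_self, sq, smul_eq_mul]

noncomputable def complexSlice (I : ℍ) : Submodule ℝ ℍ := Submodule.span ℝ {1, I}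

section complexSlice

variable {I J c d : ℍ}

theorem mem_complexSlice : c ∈ complexSlice I ↔ ∃ a b : ℝ, a • 1 + b • I = c :=
  Submodule.mem_span_pair

theorem coe_add_smul_mem_complexSlice (x y : ℝ) : (x : ℍ) + y • I ∈ complexSlice I :=
  mem_complexSlice.mpr ⟨x, y, by rw [← coe_mul_eq_smul, mul_one]⟩

theorem one_mem_complexSlice : (1 : ℍ) ∈ complexSlice I :=
  Submodule.subset_span (Set.mem_insert 1 {I})

theorem commute_of_mem_complexSlice (hc : c ∈ complexSlice I) (hd : d ∈ complexSlice I) :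
    Commute c d := by
  obtain ⟨a, b, rfl⟩ := mem_complexSlice.mp hc
  obtain ⟨a', b', rfl⟩ := mem_complexSlice.mp hd
  simp only [Commute, SemiconjBy, add_mul, mul_add, smul_mul_smul_comm, one_mul, mul_one]
  module

theorem mul_mem_complexSlice (hI : I ^ 2 = -1) (hc : c ∈ complexSlice I)
    (hd : d ∈ complexSlice I) : c * d ∈ complexSlice I := by
  obtain ⟨a, b, rfl⟩ := mem_complexSlice.mp hc
  obtain ⟨a', b', rfl⟩ := mem_complexSlice.mp hd
  have hII : I * I = -1 := by rw [← sq, hI]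
  refine mem_complexSlice.mpr ⟨a * a' - b * b', a * b' + b * a', ?_⟩
  simp only [add_mul, mul_add, smul_mul_smul_comm, one_mul, mul_one, hII]
  module

theorem mul_eq_star_mul_of_mem_complexSlice (hI : I.re = 0) (hIJ : I * J = -(J * I))
    (hc : c ∈ complexSlice I) : J * c = star c * J := by
  obtain ⟨a, b, rfl⟩ := mem_complexSlice.mp hc
  simp only [star_add, star_smul, star_one, star_eq_neg.mpr hI, mul_add, add_mul,
    mul_smul_comm, smul_mul_assoc, one_mul, mul_one, neg_mul, hIJ, smul_neg, neg_neg]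

theorem re_mul_eq_zero_of_mem_complexSlice (hJ : J.re = 0) (hIJ : I * J = -(J * I))
    (hc : c ∈ complexSlice I) : (c * J).re = 0 := by
  have hIJ_re : (I * J).re = 0 := by
    have := re_mul_comm I J
    rw [hIJ, re_neg] at this ⊢
    linarith
  obtain ⟨a, b, rfl⟩ := mem_complexSlice.mp hc
  simp [add_mul, hJ, hIJ_re]

theorem inner_mul_eq_zero_of_mem_complexSlice (hI : I ^ 2 = -1) (hJ : J.re = 0)
    (hIJ : I * J = -(J * I)) (hc : c ∈ complexSlice I) (hd : d ∈ complexSlice I) :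
    ⟪c, d * J⟫ = 0 := by
  rw [← neg_eq_zero,
    ← re_mul_eq_neg_inner_of_re_eq_zero (re_mul_eq_zero_of_mem_complexSlice hJ hIJ hd),
    ← mul_assoc]
  exact re_mul_eq_zero_of_mem_complexSlice hJ hIJ (mul_mem_complexSlice hI hc hd)

theorem inner_add_mul_add_mul_of_mem_complexSlice (hI : I ^ 2 = -1) (hJ : J.re = 0)
    (hIJ : I * J = -(J * I)) {c₁ c₂ d₁ d₂ : ℍ} (hc₁ : c₁ ∈ complexSlice I)
    (hc₂ : c₂ ∈ complexSlice I) (hd₁ : d₁ ∈ complexSlice I) (hd₂ : d₂ ∈ complexSlice I) :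
    ⟪c₁ + c₂ * J, d₁ + d₂ * J⟫ = ⟪c₁, d₁⟫ + ⟪c₂ * J, d₂ * J⟫ := by
  rw [inner_add_left, inner_add_right, inner_add_right, real_inner_comm d₁ (c₂ * J),
    inner_mul_eq_zero_of_mem_complexSlice hI hJ hIJ hc₁ hd₂,
    inner_mul_eq_zero_of_mem_complexSlice hI hJ hIJ hd₁ hc₂, add_zero, zero_add]

theorem add_mul_sub_mul_mul_of_mem_complexSlice (hI : I.re = 0) (hIJ : I * J = -(J * I))
    {q c₁ c₂ : ℍ} (hq : q ∈ complexSlice I) (hc₁ : c₁ ∈ complexSlice I)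
    (hc₂ : c₂ ∈ complexSlice I) :
    c₁ + c₂ * J - q * (c₁ + c₂ * J) * q = c₁ * (1 - q ^ 2) + ((1 - ‖q‖ ^ 2) • c₂) * J := by
  have hc₁q : q * c₁ * q = c₁ * q ^ 2 := by
    rw [(commute_of_mem_complexSlice hq hc₁).eq, mul_assoc, sq]
  have hc₂q : q * (c₂ * J) * q = ‖q‖ ^ 2 • (c₂ * J) := by
    rw [mul_assoc, mul_assoc, mul_eq_star_mul_of_mem_complexSlice hI hIJ hq, ← mul_assoc,
      ← mul_assoc, (commute_of_mem_complexSlice hq hc₂).eq, mul_assoc c₂, self_mul_star,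
      mul_coe_eq_smul, smul_mul_assoc, normSq_eq_norm_mul_self, sq]
  rw [mul_add, add_mul, hc₁q, hc₂q, mul_sub, mul_one, sub_smul, one_smul, sub_mul,
    smul_mul_assoc]
  abel

end complexSlice

end Quaternion

theorem sliceRiemannian_slice_decomposition_general (I J : Quaternion ℝ)
    (hI : I ^ 2 = -1) (hJ : J ^ 2 = -1) (hIJ : I * J = -(J * I))
    (q : Quaternion ℝ) (x y : ℝ) (hq : q = (x : Quaternion ℝ) + y • I)
    (α₁ α₂ β₁ β₂ : Quaternion ℝ)
    (hα₁ : α₁ ∈ Submodule.span ℝ ({1, I} : Set (Quaternion ℝ)))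
    (hα₂ : α₂ ∈ Submodule.span ℝ ({1, I} : Set (Quaternion ℝ)))
    (hβ₁ : β₁ ∈ Submodule.span ℝ ({1, I} : Set (Quaternion ℝ)))
    (hβ₂ : β₂ ∈ Submodule.span ℝ ({1, I} : Set (Quaternion ℝ)))
    (α β : Quaternion ℝ) (hα : α = α₁ + α₂ * J) (hβ : β = β₁ + β₂ * J) :
    sliceRiemannian q α β =
      (α * star β).re / (1 - ‖q‖ ^ 2) ^ 2 +
        4 * ‖q.im‖ ^ 2 * ((α₂ * J) * (β₂ * J)).re /
          (‖1 - q ^ 2‖ ^ 2 * (1 - ‖q‖ ^ 2) ^ 2) := by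
  have hIre := re_eq_zero_of_sq_eq_neg_one hI
  have hJre := re_eq_zero_of_sq_eq_neg_one hJ
  have hqI : q ∈ complexSlice I := hq ▸ coe_add_smul_mem_complexSlice x y
  have hq2I : 1 - q ^ 2 ∈ complexSlice I :=
    sub_mem one_mem_complexSlice (sq q ▸ mul_mem_complexSlice hI hqI hqI)
  have hnum : ⟪α - q * α * q, β - q * β * q⟫ =
      ‖1 - q ^ 2‖ ^ 2 * ⟪α₁, β₁⟫ + (1 - ‖q‖ ^ 2) ^ 2 * ⟪α₂ * J, β₂ * J⟫ := by
    rw [hα, hβ, add_mul_sub_mul_mul_of_mem_complexSlice hIre hIJ hqI hα₁ hα₂,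
      add_mul_sub_mul_mul_of_mem_complexSlice hIre hIJ hqI hβ₁ hβ₂,
      inner_add_mul_add_mul_of_mem_complexSlice hI hJre hIJ
        (mul_mem_complexSlice hI hα₁ hq2I) (Submodule.smul_mem _ _ hα₂)
        (mul_mem_complexSlice hI hβ₁ hq2I) (Submodule.smul_mem _ _ hβ₂),
      inner_mul_right_mul_right, smul_mul_assoc, smul_mul_assoc, real_inner_smul_left,
      real_inner_smul_right]
    ring
  have hinner : ⟪α, β⟫ = ⟪α₁, β₁⟫ + ⟪α₂ * J, β₂ * J⟫ := by
    rw [hα, hβ]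
    exact inner_add_mul_add_mul_of_mem_complexSlice hI hJre hIJ hα₁ hα₂ hβ₁ hβ₂
  rw [sliceRiemannian, ← inner_def, ← inner_def, hnum, hinner,
    re_mul_eq_neg_inner_of_re_eq_zero (re_mul_eq_zero_of_mem_complexSlice hJre hIJ hβ₂),
    norm_one_sub_sq_sq]
  rcases eq_or_ne (1 - ‖q‖ ^ 2) 0 with hs | hs
  · -- on the unit sphere both sides are `0` because `x / 0 = 0`
    simp [hs]
  · field_simp
    ring

/-- for `q ∈ 𝔹 ∩ ℂ_I` and `α = α₁ + α₂J`, `β = β₁ + β₂J` with components in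
`ℂ_I`, the slice Riemannian metric decomposes as the hyperbolic metric plus a perturbation:
`G_q(α, β) = Re(α conj β)/(1 − ‖q‖²)² + 4‖Im q‖² Re((α₂J)(β₂J))/(‖1 − q²‖²(1 − ‖q‖²)²)`. -/
theorem sliceRiemannian_slice_decomposition (I J : Quaternion ℝ)
    (hI : I ^ 2 = -1) (hJ : J ^ 2 = -1) (hIJ : I * J = -(J * I))
    (q : Quaternion ℝ) (hqnorm : ‖q‖ < 1) (x y : ℝ) (hq : q = (x : Quaternion ℝ) + y • I)
    (α₁ α₂ β₁ β₂ : Quaternion ℝ)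
    (hα₁ : α₁ ∈ Submodule.span ℝ ({1, I} : Set (Quaternion ℝ)))
    (hα₂ : α₂ ∈ Submodule.span ℝ ({1, I} : Set (Quaternion ℝ)))
    (hβ₁ : β₁ ∈ Submodule.span ℝ ({1, I} : Set (Quaternion ℝ)))
    (hβ₂ : β₂ ∈ Submodule.span ℝ ({1, I} : Set (Quaternion ℝ)))
    (α β : Quaternion ℝ) (hα : α = α₁ + α₂ * J) (hβ : β = β₁ + β₂ * J) :
    sliceRiemannian q α β =
      (α * star β).re / (1 - ‖q‖ ^ 2) ^ 2 +
        4 * ‖q.im‖ ^ 2 * ((α₂ * J) * (β₂ * J)).re /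
          (‖1 - q ^ 2‖ ^ 2 * (1 - ‖q‖ ^ 2) ^ 2) :=
  sliceRiemannian_slice_decomposition_general I J hI hJ hIJ q x y hq α₁ α₂ β₁ β₂ hα₁ hα₂ hβ₁ hβ₂ α β
    hα hβ
end

section
/- Let I, J ∈ ℍ satisfy I² = −1, J² = −1 and IJ = −JI. Let q ∈ ℍ with ‖q‖ < 1 and q ∈ ℂ_I, and let α = α₁ + α₂·J with α₁, α₂ in the real span of {1, I}. Then G_q(α, α) = ‖α − qαq‖² / (‖1 − q²‖² · (1 − ‖q‖²)²) = ‖α₁‖² / (1 − ‖q‖²)² + ‖α₂‖² / ‖1 − q²‖². -/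
section SpanOnePair

variable {R A : Type*} [CommRing R] [Ring A] [Algebra R A] {I x y : A}

theorem commute_of_mem_span_one_pair (hx : x ∈ Submodule.span R {1, I})
    (hy : y ∈ Submodule.span R {1, I}) : Commute x y := by
  obtain ⟨a, b, rfl⟩ := Submodule.mem_span_pair.1 hx
  obtain ⟨c, d, rfl⟩ := Submodule.mem_span_pair.1 hy
  simp only [commute_iff_eq, add_mul, mul_add, smul_mul_smul_comm, one_mul, mul_one]
  module

theorem mul_mem_span_one_pair (hI : I ^ 2 = -1) (hx : x ∈ Submodule.span R {1, I})
    (hy : y ∈ Submodule.span R {1, I}) : x * y ∈ Submodule.span R {1, I} := by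
  obtain ⟨a, b, rfl⟩ := Submodule.mem_span_pair.1 hx
  obtain ⟨c, d, rfl⟩ := Submodule.mem_span_pair.1 hy
  have hII : I * I = -1 := by rw [← sq, hI]
  refine Submodule.mem_span_pair.2 ⟨a * c - b * d, a * d + b * c, ?_⟩
  simp only [add_mul, mul_add, smul_mul_smul_comm, one_mul, mul_one, hII]
  module

end SpanOnePair

theorem one_sub_sq_ne_zero_of_norm_lt_one {R : Type*} [SeminormedRing R] [NormOneClass R] {q : R}
    (hq : ‖q‖ < 1) : 1 - q ^ 2 ≠ 0 := by
  refine sub_ne_zero.2 fun h => ?_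
  have hq2 : ‖q ^ 2‖ < 1 := (norm_pow_le q 2).trans_lt (pow_lt_one₀ (norm_nonneg q) hq two_ne_zero)
  rw [← h, norm_one] at hq2
  exact hq2.false

open Quaternion

namespace Quaternion

variable {I J q x a b α₁ α₂ : ℍ}

theorem re_eq_zero_of_sq_eq_neg_one_s14 (hI : I ^ 2 = -1) : I.re = 0 := by
  have h := congr_arg (fun z : ℍ => (z.re, z.imI, z.imJ, z.imK)) hI
  simp only [sq, re_mul, imI_mul, imJ_mul, imK_mul, re_neg, re_one, imI_neg, imI_one, imJ_neg,
    imJ_one, imK_neg, imK_one, Prod.mk.injEq] at h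
  obtain ⟨hre, himI, himJ, himK⟩ := h
  -- a nonzero real part would force `2 I.re • I.im = 0`, i.e. `I` real with `I ^ 2 = I.re ^ 2 ≥ 0`
  nlinarith [sq_nonneg I.re, sq_nonneg I.imI, sq_nonneg I.imJ, sq_nonneg I.imK]

theorem star_eq_neg_of_sq_eq_neg_one (hI : I ^ 2 = -1) : star I = -I :=
  star_eq_neg.2 (re_eq_zero_of_sq_eq_neg_one_s14 hI)

theorem norm_eq_one_of_sq_eq_neg_one (hI : I ^ 2 = -1) : ‖I‖ = 1 := by
  have h : ‖I‖ ^ 2 = 1 ^ 2 := by rw [← norm_pow, hI, norm_neg, norm_one, one_pow]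
  exact (pow_left_inj₀ (norm_nonneg I) zero_le_one two_ne_zero).1 h

theorem star_mem_span_one_pair (hI : I ^ 2 = -1) (hx : x ∈ Submodule.span ℝ {1, I}) :
    star x ∈ Submodule.span ℝ {1, I} := by
  obtain ⟨a, b, rfl⟩ := Submodule.mem_span_pair.1 hx
  refine Submodule.mem_span_pair.2 ⟨a, -b, ?_⟩
  rw [star_add, star_smul, star_smul, star_one, star_eq_neg_of_sq_eq_neg_one hI, neg_smul,
    smul_neg]

theorem mul_eq_star_mul_of_mem_span_one_pair (hI : I ^ 2 = -1) (hIJ : I * J = -(J * I))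
    (hx : x ∈ Submodule.span ℝ {1, I}) : J * x = star x * J := by
  obtain ⟨a, b, rfl⟩ := Submodule.mem_span_pair.1 hx
  simp only [star_add, star_smul, star_one, star_eq_neg_of_sq_eq_neg_one hI, mul_add, add_mul,
    mul_smul_comm, smul_mul_assoc, mul_one, one_mul, smul_neg, neg_mul, hIJ, neg_neg]

theorem re_mul_eq_zero_of_mem_span_one_pair (hJ : J ^ 2 = -1) (hIJ : I * J = -(J * I))
    (hx : x ∈ Submodule.span ℝ {1, I}) : (x * J).re = 0 := by
  have hIJ_re : (I * J).re = 0 := by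
    have h := congr_arg QuaternionAlgebra.re hIJ
    simp only [re_mul, re_neg] at h ⊢
    linarith
  obtain ⟨a, b, rfl⟩ := Submodule.mem_span_pair.1 hx
  simp [add_mul, hIJ_re, re_eq_zero_of_sq_eq_neg_one_s14 hJ]

theorem norm_add_mul_sq_of_mem_span_one_pair (hI : I ^ 2 = -1) (hJ : J ^ 2 = -1)
    (hIJ : I * J = -(J * I)) (ha : a ∈ Submodule.span ℝ {1, I})
    (hb : b ∈ Submodule.span ℝ {1, I}) : ‖a + b * J‖ ^ 2 = ‖a‖ ^ 2 + ‖b‖ ^ 2 := by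
  have hJb : J * star b = b * J := by
    rw [mul_eq_star_mul_of_mem_span_one_pair hI hIJ (star_mem_span_one_pair hI hb), star_star]
  have horth : inner ℝ a (b * J) = 0 := by
    rw [inner_def, star_mul, star_eq_neg_of_sq_eq_neg_one hJ, neg_mul, mul_neg, hJb, ← mul_assoc,
      re_neg, re_mul_eq_zero_of_mem_span_one_pair hJ hIJ (mul_mem_span_one_pair hI ha hb), neg_zero]
  rw [sq, sq, sq, norm_add_sq_eq_norm_sq_add_norm_sq_real horth, norm_mul,
    norm_eq_one_of_sq_eq_neg_one hJ, mul_one]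

theorem sub_mul_mul_eq_of_mem_span_one_pair (hI : I ^ 2 = -1) (hIJ : I * J = -(J * I))
    (hq : q ∈ Submodule.span ℝ {1, I}) (hα₁ : α₁ ∈ Submodule.span ℝ {1, I})
    (hα₂ : α₂ ∈ Submodule.span ℝ {1, I}) :
    α₁ + α₂ * J - q * (α₁ + α₂ * J) * q = (1 - q ^ 2) * α₁ + ((1 - ‖q‖ ^ 2) • α₂) * J := by
  have h₁ : q * α₁ * q = q ^ 2 * α₁ := by
    rw [mul_assoc, ← (commute_of_mem_span_one_pair hq hα₁).eq, ← mul_assoc, ← sq]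
  have h₂ : q * (α₂ * J) * q = (‖q‖ ^ 2 • α₂) * J := calc
    q * (α₂ * J) * q = q * α₂ * (J * q) := by noncomm_ring
    _ = α₂ * (q * star q) * J := by
      rw [mul_eq_star_mul_of_mem_span_one_pair hI hIJ hq,
        (commute_of_mem_span_one_pair hq hα₂).eq]
      noncomm_ring
    _ = (‖q‖ ^ 2 • α₂) * J := by
      rw [self_mul_star, mul_coe_eq_smul, normSq_eq_norm_mul_self, sq]
  rw [mul_add, add_mul, h₁, h₂, sub_mul, one_mul, sub_smul, one_smul, sub_mul]
  abel

end Quaternion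

theorem sliceRiemannian_self (q α : ℍ) :
    sliceRiemannian q α α = ‖α - q * α * q‖ ^ 2 / (‖1 - q ^ 2‖ ^ 2 * (1 - ‖q‖ ^ 2) ^ 2) := by
  rw [sliceRiemannian, ← inner_def, real_inner_self_eq_norm_sq]

/-- for `q ∈ 𝔹 ∩ ℂ_I` and `α = α₁ + α₂J` with `α₁, α₂ ∈ ℂ_I`,
`G_q(α, α) = ‖α − qαq‖²/(‖1 − q²‖²(1 − ‖q‖²)²) = ‖α₁‖²/(1 − ‖q‖²)² + ‖α₂‖²/‖1 − q²‖²`,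
i.e. the slice Riemannian metric coincides with the Arcozzi–Sarfatti metric. -/
theorem sliceRiemannian_eq_arcozziSarfatti (I J : Quaternion ℝ)
    (hI : I ^ 2 = -1) (hJ : J ^ 2 = -1) (hIJ : I * J = -(J * I))
    (q : Quaternion ℝ) (hqnorm : ‖q‖ < 1)
    (hqI : q ∈ Submodule.span ℝ ({1, I} : Set (Quaternion ℝ)))
    (α₁ α₂ : Quaternion ℝ)
    (hα₁ : α₁ ∈ Submodule.span ℝ ({1, I} : Set (Quaternion ℝ)))
    (hα₂ : α₂ ∈ Submodule.span ℝ ({1, I} : Set (Quaternion ℝ)))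
    (α : Quaternion ℝ) (hα : α = α₁ + α₂ * J) :
    sliceRiemannian q α α = ‖α - q * α * q‖ ^ 2 / (‖1 - q ^ 2‖ ^ 2 * (1 - ‖q‖ ^ 2) ^ 2) ∧
    sliceRiemannian q α α = ‖α₁‖ ^ 2 / (1 - ‖q‖ ^ 2) ^ 2 + ‖α₂‖ ^ 2 / ‖1 - q ^ 2‖ ^ 2 := by
  refine ⟨sliceRiemannian_self q α, ?_⟩
  have ht : 0 < 1 - ‖q‖ ^ 2 := sub_pos.2 (pow_lt_one₀ (norm_nonneg q) hqnorm two_ne_zero)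
  have hA : ‖1 - q ^ 2‖ ≠ 0 := norm_ne_zero_iff.2 (one_sub_sq_ne_zero_of_norm_lt_one hqnorm)
  have hAmem : 1 - q ^ 2 ∈ Submodule.span ℝ {1, I} := by
    refine Submodule.sub_mem _ (Submodule.subset_span (by simp)) ?_
    rw [sq]
    exact mul_mem_span_one_pair hI hqI hqI
  rw [sliceRiemannian_self, hα, sub_mul_mul_eq_of_mem_span_one_pair hI hIJ hqI hα₁ hα₂,
    norm_add_mul_sq_of_mem_span_one_pair hI hJ hIJ (mul_mem_span_one_pair hI hAmem hα₁)
      (Submodule.smul_mem _ _ hα₂),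
    norm_mul, norm_smul, Real.norm_of_nonneg ht.le]
  field_simp
end
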